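/- arXiv:2201.05375 — 2 statements merged into one kernel-verified Lean document; each statement's English description precedes it below -/
import Mathlib

section
/- With α̃ = α σ_S/σ_x > 0, the asymptotic volatility squared lim_{t→∞} v(t)/t = σ_S²(1 - 1/α̃)², and this limit is at most σ_S² if and only if α̃ ≥ 1/2. -/
noncomputable def Upsilon (a t : ℝ) : ℝ :=
  (1 / (2 * a ^ 3)) * (-3 + 2 * a * t + 4 * Real.exp (-a * t) - Real.exp (-2 * a * t))

noncomputable def Theta (a t : ℝ) : ℝ :=
  (1 / a ^ 2) * (-1 + a * t + Real.exp (-a * t))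

theorem stmt4 (σx σS α : ℝ) (hx : 0 < σx) (hS : 0 < σS) (hα : 0 < α)
    (αt : ℝ) (hαt : αt = α * σS / σx) :
    Filter.Tendsto
      (fun t : ℝ => (σx ^ 2 * Upsilon α t + σS ^ 2 * t - 2 * σx * σS * Theta α t) / t)
      Filter.atTop (nhds (σS ^ 2 * (1 - 1 / αt) ^ 2)) ∧
    (σS ^ 2 * (1 - 1 / αt) ^ 2 ≤ σS ^ 2 ↔ 1 / 2 ≤ αt) := by
  have hαt0 : 0 < αt := by rw [hαt]; positivity
  have hα2 : (α : ℝ) ≠ 0 := ne_of_gt hα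
  have hA : σS ^ 2 * (1 - 1 / αt) ^ 2 = σx ^ 2 / α ^ 2 + σS ^ 2 - 2 * σx * σS / α := by
    subst hαt
    field_simp
    ring
  constructor
  · -- limit part
    set L := σx ^ 2 / α ^ 2 + σS ^ 2 - 2 * σx * σS / α with hL
    have he1 : Filter.Tendsto (fun t : ℝ => Real.exp (-α * t)) Filter.atTop (nhds 0) := by
      apply Real.tendsto_exp_atBot.comp
      exact Filter.Tendsto.const_mul_atTop_of_neg (neg_lt_zero.mpr hα) Filter.tendsto_id
    have he2 : Filter.Tendsto (fun t : ℝ => Real.exp (-2 * α * t)) Filter.atTop (nhds 0) := by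
      have heq : (fun t : ℝ => Real.exp (-2 * α * t))
          = fun t => Real.exp (-α * t) * Real.exp (-α * t) := by
        funext t; rw [← Real.exp_add]; ring_nf
      rw [heq]; simpa using he1.mul he1
    have hgc : Filter.Tendsto (fun t : ℝ =>
        σx ^ 2 / (2 * α ^ 3) * (-3 + 4 * Real.exp (-α * t) - Real.exp (-2 * α * t))
          - 2 * σx * σS / α ^ 2 * (-1 + Real.exp (-α * t))) Filter.atTop
        (nhds (σx ^ 2 / (2 * α ^ 3) * (-3 + 4 * 0 - 0) - 2 * σx * σS / α ^ 2 * (-1 + 0))) :=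
      (((tendsto_const_nhds.add (he1.const_mul 4)).sub he2).const_mul _).sub
        ((tendsto_const_nhds.add he1).const_mul _)
    have hinv : Filter.Tendsto (fun t : ℝ => 1 / t) Filter.atTop (nhds 0) := by
      simpa [one_div] using tendsto_inv_atTop_zero
    have hmain : Filter.Tendsto (fun t : ℝ => L +
        (σx ^ 2 / (2 * α ^ 3) * (-3 + 4 * Real.exp (-α * t) - Real.exp (-2 * α * t))
          - 2 * σx * σS / α ^ 2 * (-1 + Real.exp (-α * t))) * (1 / t))
        Filter.atTop (nhds (L + _ * 0)) := tendsto_const_nhds.add (hgc.mul hinv)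
    rw [hA]
    have hlim : Filter.Tendsto (fun t : ℝ => L +
        (σx ^ 2 / (2 * α ^ 3) * (-3 + 4 * Real.exp (-α * t) - Real.exp (-2 * α * t))
          - 2 * σx * σS / α ^ 2 * (-1 + Real.exp (-α * t))) * (1 / t))
        Filter.atTop (nhds L) := by simpa using hmain
    refine hlim.congr' ?_
    filter_upwards [Filter.eventually_gt_atTop (0 : ℝ)] with t ht
    have ht0 : t ≠ 0 := ne_of_gt ht
    simp only [Upsilon, Theta, hL]
    field_simp
    ring
  · constructor
    · intro h
      have hS2 : 0 < σS ^ 2 := by positivity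
      have h2 : (1 - 1 / αt) ^ 2 ≤ 1 := by nlinarith
      have h3 : 1 / αt ≤ 2 := by nlinarith [one_div_pos.2 hαt0]
      rw [div_le_iff₀ hαt0] at h3
      linarith
    · intro h
      have h1 : 0 < 1 / αt := one_div_pos.2 hαt0
      have h2 : 1 / αt ≤ 2 := by
        rw [div_le_iff₀ hαt0]; linarith
      have h3 : (1 - 1 / αt) ^ 2 ≤ 1 := by
        nlinarith [mul_nonneg h1.le (show (0:ℝ) ≤ 2 - 1 / αt by linarith)]
      calc σS ^ 2 * (1 - 1 / αt) ^ 2 ≤ σS ^ 2 * 1 :=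
            mul_le_mul_of_nonneg_left h3 (sq_nonneg σS)
        _ = σS ^ 2 := mul_one _
end

section
/- Under the same hypotheses (ν < 0, σ_x, σ_S > 0, α ≠ σ_x/(2σ_S), A = 1-2ν, C = 2ν(α - σ_x/σ_S)² - α², c₁ = √(-C/A)), for any real c with c ≠ α and c ≠ -α, the equation (1 + σ_x/(σ_S(c-α)))·(1 - σ_x/(σ_S(c+α))) = 1/(2ν) holds if and only if c = c₁ or c = -c₁. -/
theorem stmt6 (ν α σx σS : ℝ) (hν : ν < 0) (hx : 0 < σx) (hS : 0 < σS)
    (hα : α ≠ σx / (2 * σS))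
    (A C c₁ : ℝ) (hA : A = 1 - 2 * ν) (hC : C = 2 * ν * (α - σx / σS) ^ 2 - α ^ 2)
    (hc₁ : c₁ = Real.sqrt (-C / A)) :
    ∀ c : ℝ, c ≠ α → c ≠ -α →
      ((1 + σx / (σS * (c - α))) * (1 - σx / (σS * (c + α))) = 1 / (2 * ν) ↔
        c = c₁ ∨ c = -c₁) := by
  intro c hc1 hc2
  have hA0 : (0:ℝ) < A := by rw [hA]; linarith
  have hCA : 0 ≤ -C / A := by
    apply div_nonneg _ hA0.le
    rw [hC]
    nlinarith [sq_nonneg (α - σx / σS), sq_nonneg α]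
  have hsq : c₁ ^ 2 = -C / A := by
    rw [hc₁, sq, Real.mul_self_sqrt hCA]
  have hν0 : ν ≠ 0 := ne_of_lt hν
  have hS0 : σS ≠ 0 := ne_of_gt hS
  have hm : c - α ≠ 0 := sub_ne_zero.mpr hc1
  have hp : c + α ≠ 0 := by
    intro h; apply hc2; linarith
  have key : (1 + σx / (σS * (c - α))) * (1 - σx / (σS * (c + α))) = 1 / (2 * ν) ↔
      A * c ^ 2 = -C := by
    rw [hA, hC]
    constructor
    · intro h
      field_simp at h
      have key2 : σS ^ 2 * ((1 - 2 * ν) * c ^ 2) =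
          σS ^ 2 * (-(2 * ν * (α - σx / σS) ^ 2 - α ^ 2)) := by
        field_simp
        linear_combination (-1 : ℝ) * h
      exact mul_left_cancel₀ (by positivity) key2
    · intro h
      have key2 : σS ^ 2 * ((1 - 2 * ν) * c ^ 2) =
          σS ^ 2 * (-(2 * ν * (α - σx / σS) ^ 2 - α ^ 2)) := by rw [h]
      field_simp at key2 ⊢
      linear_combination (-1 : ℝ) * key2
  rw [key]
  have h2 : A * c ^ 2 = -C ↔ c ^ 2 = c₁ ^ 2 := by
    rw [hsq, eq_div_iff (ne_of_gt hA0)]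
    constructor <;> intro h <;> linarith
  rw [h2]
  constructor
  · intro h
    have : (c - c₁) * (c + c₁) = 0 := by nlinarith
    rcases mul_eq_zero.mp this with h' | h'
    · left; linarith
    · right; linarith
  · rintro (rfl | rfl) <;> ring
end
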